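/- Let K be a 3DM instance and σ(K) the associated spanUFP instance. For every hyperedge h_ℓ = (x_i, y_j, z_k) ∈ E and every block I of σ(K), the eight tasks t_L(x_i), t_R(x_i), t_L(y_j), t_R(y_j), t_L(z_k), t_R(z_k), t_L(h_ℓ), t_R(h_ℓ) admit a feasible schedule in which all eight schedules are contained in I (concretely: t_L(x_i), t_L(y_j), t_L(z_k), t_L(h_ℓ) starting at the leftmost edge of I and t_R(x_i), t_R(y_j), t_R(z_k), t_R(h_ℓ) ending at the rightmost edge of I is feasible). -/

import Mathlib

/-- `ρ = max {29, 3q}`. -/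
def rho (q : ℕ) : ℕ := max 29 (3 * q)

/-- The number `x'_i = iρ + 1` associated to the node `x_i`. -/
def xnum (q i : ℕ) : ℤ := (i : ℤ) * (rho q : ℤ) + 1

/-- The number `y'_j = jρ² + 2` associated to the node `y_j`. -/
def ynum (q j : ℕ) : ℤ := (j : ℤ) * (rho q : ℤ) ^ 2 + 2

/-- The number `z'_k = kρ³ + 4` associated to the node `z_k`. -/
def znum (q k : ℕ) : ℤ := (k : ℤ) * (rho q : ℤ) ^ 3 + 4

/-- The number `h'_ℓ = -iρ - jρ² - kρ³ - 7` associated to the hyperedge `h_ℓ = (x_i, y_j, z_k)`. -/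
def hnum (q : ℕ) (h : ℕ × ℕ × ℕ) : ℤ :=
  -((h.1 : ℤ) * (rho q : ℤ)) - (h.2.1 : ℤ) * (rho q : ℤ) ^ 2 - (h.2.2 : ℤ) * (rho q : ℤ) ^ 3 - 7

/-- The set `Q(K)` of the `3q + m` integers associated to a 3DM instance `K = (q, E)`. -/
def QK (q : ℕ) (E : Finset (ℕ × ℕ × ℕ)) : Finset ℤ :=
  ((Finset.Icc 1 q).image (xnum q)) ∪ ((Finset.Icc 1 q).image (ynum q)) ∪
    ((Finset.Icc 1 q).image (znum q)) ∪ (E.image (hnum q))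

/-- `(q, E)` is a 3DM instance: every hyperedge is a triple of node indices in `{1, …, q}`
(`X`, `Y` and `Z` are identified with `{1, …, q}`). -/
def ValidE (q : ℕ) (E : Finset (ℕ × ℕ × ℕ)) : Prop :=
  ∀ h ∈ E, h.1 ∈ Finset.Icc 1 q ∧ h.2.1 ∈ Finset.Icc 1 q ∧ h.2.2 ∈ Finset.Icc 1 q

/-- A hypermatching: no two distinct hyperedges share a node. -/
def Matching (M : Finset (ℕ × ℕ × ℕ)) : Prop :=
  ∀ h ∈ M, ∀ h' ∈ M, h ≠ h' → h.1 ≠ h'.1 ∧ h.2.1 ≠ h'.2.1 ∧ h.2.2 ≠ h'.2.2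

/-- `μ = 1 + max_{u' ∈ Q(K)} 10|u'|`. -/
def mu (q : ℕ) (E : Finset (ℕ × ℕ × ℕ)) : ℕ :=
  1 + (QK q E).sup (fun u => 10 * u.natAbs)

/-- `A = 5μ + 4`. -/
def Aval (q : ℕ) (E : Finset (ℕ × ℕ × ℕ)) : ℕ := 5 * mu q E + 4

/-- The path of `σ(K)` has `(2A+1)q - 1` edges; edges are identified with the
integers `0, 1, …, (2A+1)q - 2`. -/
def numEdges (q : ℕ) (E : Finset (ℕ × ℕ × ℕ)) : ℤ := (2 * (Aval q E : ℤ) + 1) * q - 1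

/-- The capacity profile of `σ(K)`: within each block of `2A` consecutive edges, the
leftmost `A` edges have capacity `4A + 4` and the rightmost `A` edges have capacity `4A`;
blocks are separated by single edges of capacity `0`. -/
def cap (q : ℕ) (E : Finset (ℕ × ℕ × ℕ)) (e : ℤ) : ℤ :=
  let A : ℤ := (Aval q E : ℤ)
  let r := e % (2 * A + 1)
  if r < A then 4 * A + 4 else if r < 2 * A then 4 * A else 0

/-- An element `u ∈ X ∪ Y ∪ Z ∪ E` of the 3DM instance. -/
inductive Elem where
  | X : ℕ → Elem
  | Y : ℕ → Elem
  | Z : ℕ → Elem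
  | H : ℕ × ℕ × ℕ → Elem
deriving DecidableEq

/-- The number `u' ∈ Q(K)` associated to `u ∈ X ∪ Y ∪ Z ∪ E`. -/
def elemVal (q : ℕ) : Elem → ℤ
  | .X i => xnum q i
  | .Y j => ynum q j
  | .Z k => znum q k
  | .H h => hnum q h

/-- `u` is an actual element of the instance `(q, E)`. -/
def validElem (q : ℕ) (E : Finset (ℕ × ℕ × ℕ)) : Elem → Prop
  | .X i => i ∈ Finset.Icc 1 q
  | .Y j => j ∈ Finset.Icc 1 q
  | .Z k => k ∈ Finset.Icc 1 q
  | .H h => h ∈ E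

/-- A task of `σ(K)` is a pair `(u, s)` with `u ∈ X ∪ Y ∪ Z ∪ E`; `s = true` encodes the
task `t_L(u)` and `s = false` encodes the task `t_R(u)`. All tasks have weight 1. -/
abbrev UTask := Elem × Bool

/-- The length of a task: `t_L(u)` has length `A - 10u'`, `t_R(u)` has length `A + 10u'`. -/
def taskLen (q : ℕ) (E : Finset (ℕ × ℕ × ℕ)) (t : UTask) : ℤ :=
  if t.2 then (Aval q E : ℤ) - 10 * elemVal q t.1
  else (Aval q E : ℤ) + 10 * elemVal q t.1

/-- The demand of a task: `t_L(u)` has demand `A + 10u' + 1`, `t_R(u)` has demand `A - 10u'`. -/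
def taskDem (q : ℕ) (E : Finset (ℕ × ℕ × ℕ)) (t : UTask) : ℤ :=
  if t.2 then (Aval q E : ℤ) + 10 * elemVal q t.1 + 1
  else (Aval q E : ℤ) - 10 * elemVal q t.1

/-- The schedule of task `t`: the contiguous interval of `taskLen` edges starting at
edge `start t`. -/
noncomputable def sched (q : ℕ) (E : Finset (ℕ × ℕ × ℕ)) (start : UTask → ℤ) (t : UTask) : Finset ℤ :=
  Finset.Ico (start t) (start t + taskLen q E t)

/-- `(S, start)` is a feasible solution of `σ(K)`: every selected task is a task of the
instance, is scheduled (contiguously, with exactly its length) within the path, and on every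
edge `e` the total demand of the selected tasks whose schedule contains `e` is at most the
capacity of `e`. -/
def Feasible (q : ℕ) (E : Finset (ℕ × ℕ × ℕ)) (S : Finset UTask) (start : UTask → ℤ) : Prop :=
  (∀ t ∈ S, validElem q E t.1) ∧
  (∀ t ∈ S, 0 ≤ start t ∧ start t + taskLen q E t ≤ numEdges q E) ∧
  (∀ e : ℤ, 0 ≤ e → e < numEdges q E →
    ∑ t ∈ S.filter (fun t => e ∈ sched q E start t), taskDem q E t ≤ cap q E e)

/-- The first edge of the `b`-th block (`b ∈ {0, …, q-1}`). -/
def blockStart (q : ℕ) (E : Finset (ℕ × ℕ × ℕ)) (b : ℕ) : ℤ :=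
  (b : ℤ) * (2 * (Aval q E : ℤ) + 1)

/-- The `b`-th block of `2A` consecutive edges (`b ∈ {0, …, q-1}`). -/
noncomputable def block (q : ℕ) (E : Finset (ℕ × ℕ × ℕ)) (b : ℕ) : Finset ℤ :=
  Finset.Ico (blockStart q E b) (blockStart q E b + 2 * (Aval q E : ℤ))

/-- The eight tasks `t_L(x_i), t_R(x_i), t_L(y_j), t_R(y_j), t_L(z_k), t_R(z_k),
t_L(h_ℓ), t_R(h_ℓ)` associated to a hyperedge `h_ℓ = (x_i, y_j, z_k)`. -/
def edgeTasks (h : ℕ × ℕ × ℕ) : Finset UTask :=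
  {(Elem.X h.1, true), (Elem.X h.1, false), (Elem.Y h.2.1, true), (Elem.Y h.2.1, false),
   (Elem.Z h.2.2, true), (Elem.Z h.2.2, false), (Elem.H h, true), (Elem.H h, false)}

/- Put `t_L(u)` on `[s, s + A - 10u')` and `t_R(u)` on `[s + A - 10u', s + 2A)`, where `s` is the
first edge of the block. On every edge `e` of the block exactly one task of each pair is active,
so the load is `4A - 10 ∑ u'` plus `20u' + 1` for every `u` whose left task is active, i.e. with
`10u' < s + A - e`. As `x'_i + y'_j + z'_k + h'_ℓ = 0`, the values below any threshold have
nonpositive sum, so the load is at most `4A + 4` on the left half of the block; on the right half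
the threshold is nonpositive, each such `u'` is negative, and the load is at most `4A`. -/

theorem sum_filter_lt_nonpos_of_sum_eq_zero {ι M : Type*} [AddCommGroup M] [LinearOrder M]
    [IsOrderedAddMonoid M] {s : Finset ι} {f : ι → M} (hf : ∑ i ∈ s, f i = 0) (c : M) :
    ∑ i ∈ s with f i < c, f i ≤ 0 := by
  by_cases hc : c ≤ 0
  · exact Finset.sum_nonpos fun i hi => ((Finset.mem_filter.1 hi).2.trans_le hc).le
  · have hrest : 0 ≤ ∑ i ∈ s with ¬f i < c, f i :=
      Finset.sum_nonneg fun i hi => (not_le.1 hc).le.trans (not_lt.1 (Finset.mem_filter.1 hi).2)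
    rw [← Finset.sum_filter_add_sum_filter_not s (fun i => f i < c)] at hf
    exact le_of_add_le_of_nonneg_left hf.le hrest

lemma elemVal_mem_QK {q : ℕ} {E : Finset (ℕ × ℕ × ℕ)} {u : Elem} (hu : validElem q E u) :
    elemVal q u ∈ QK q E := by
  simp only [QK, Finset.mem_union, Finset.mem_image]
  cases u with
  | X i => exact .inl (.inl (.inl ⟨i, hu, rfl⟩))
  | Y j => exact .inl (.inl (.inr ⟨j, hu, rfl⟩))
  | Z k => exact .inl (.inr ⟨k, hu, rfl⟩)
  | H h => exact .inr ⟨h, hu, rfl⟩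

lemma elemVal_bounds {q : ℕ} {E : Finset (ℕ × ℕ × ℕ)} {u : Elem} (hu : validElem q E u) :
    -(Aval q E : ℤ) < 10 * elemVal q u ∧ 10 * elemVal q u < Aval q E := by
  have hle : 10 * (elemVal q u).natAbs ≤ (QK q E).sup (fun v => 10 * v.natAbs) :=
    Finset.le_sup (f := fun v => 10 * v.natAbs) (elemVal_mem_QK hu)
  have hA : Aval q E = 5 * (1 + (QK q E).sup (fun v => 10 * v.natAbs)) + 4 := rfl
  omega

lemma cap_nonneg (q : ℕ) (E : Finset (ℕ × ℕ × ℕ)) (e : ℤ) : 0 ≤ cap q E e := by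
  simp only [cap]
  split_ifs <;> omega

lemma cap_of_mem_block {q : ℕ} {E : Finset (ℕ × ℕ × ℕ)} {b : ℕ} {e : ℤ} (he : e ∈ block q E b) :
    cap q E e = if e < blockStart q E b + Aval q E then 4 * (Aval q E : ℤ) + 4
      else 4 * (Aval q E : ℤ) := by
  rw [block, Finset.mem_Ico] at he
  have hmod : e % (2 * (Aval q E : ℤ) + 1) = e - blockStart q E b := by
    have hoff : (e - blockStart q E b) % (2 * (Aval q E : ℤ) + 1) = e - blockStart q E b :=
      Int.emod_eq_of_lt (by omega) (by omega)
    rwa [blockStart, Int.sub_mul_emod_self_right] at hoff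
  simp only [cap, hmod]
  split_ifs <;> omega

lemma block_within_path {q : ℕ} (E : Finset (ℕ × ℕ × ℕ)) {b : ℕ} (hb : b < q) :
    0 ≤ blockStart q E b ∧ blockStart q E b + 2 * (Aval q E : ℤ) ≤ numEdges q E := by
  have hbq : (b : ℤ) + 1 ≤ q := by exact_mod_cast hb
  constructor
  · unfold blockStart; positivity
  · unfold blockStart numEdges; nlinarith

def leftRightStart (q : ℕ) (E : Finset (ℕ × ℕ × ℕ)) (b : ℕ) (t : UTask) : ℤ :=
  if t.2 then blockStart q E b else blockStart q E b + 2 * (Aval q E : ℤ) - taskLen q E t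

section leftRightStart

variable {q : ℕ} {E : Finset (ℕ × ℕ × ℕ)} {b : ℕ} {e : ℤ}

lemma mem_sched_leftRightStart_true (u : Elem) :
    e ∈ sched q E (leftRightStart q E b) (u, true) ↔
      blockStart q E b ≤ e ∧ e < blockStart q E b + Aval q E - 10 * elemVal q u := by
  simp only [sched, leftRightStart, taskLen, if_true, Finset.mem_Ico]
  omega

lemma mem_sched_leftRightStart_false (u : Elem) :
    e ∈ sched q E (leftRightStart q E b) (u, false) ↔
      blockStart q E b + Aval q E - 10 * elemVal q u ≤ e ∧
        e < blockStart q E b + 2 * (Aval q E : ℤ) := by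
  simp only [sched, leftRightStart, taskLen, Bool.false_eq_true, if_false, Finset.mem_Ico]
  omega

lemma leftRightStart_bounds {t : UTask} (ht : validElem q E t.1) :
    blockStart q E b ≤ leftRightStart q E b t ∧
      leftRightStart q E b t + taskLen q E t ≤ blockStart q E b + 2 * (Aval q E : ℤ) := by
  obtain ⟨u, _ | _⟩ := t <;> have := elemVal_bounds (u := u) ht <;>
    simp only [leftRightStart, taskLen, Bool.false_eq_true, if_true, if_false] <;> omega

lemma sched_leftRightStart_subset_block {t : UTask} (ht : validElem q E t.1) :
    sched q E (leftRightStart q E b) t ⊆ block q E b :=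
  Finset.Ico_subset_Ico (leftRightStart_bounds ht).1 (leftRightStart_bounds ht).2

lemma pair_demand_of_mem_block (he : e ∈ block q E b) (u : Elem) :
    ∑ β : Bool, (if e ∈ sched q E (leftRightStart q E b) (u, β) then taskDem q E (u, β) else 0) =
      Aval q E - 10 * elemVal q u +
        if 10 * elemVal q u < blockStart q E b + Aval q E - e then 20 * elemVal q u + 1 else 0 := by
  rw [block, Finset.mem_Ico] at he
  simp only [Fintype.sum_bool, mem_sched_leftRightStart_true, mem_sched_leftRightStart_false,
    taskDem, if_true, Bool.false_eq_true, if_false]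
  split_ifs <;> omega

end leftRightStart

def hyperedgeElems (h : ℕ × ℕ × ℕ) : Finset Elem := {.X h.1, .Y h.2.1, .Z h.2.2, .H h}

section hyperedgeElems

variable {q : ℕ} {E : Finset (ℕ × ℕ × ℕ)} {h : ℕ × ℕ × ℕ}

lemma validElem_of_mem_hyperedgeElems (hE : ValidE q E) (hh : h ∈ E) {u : Elem}
    (hu : u ∈ hyperedgeElems h) : validElem q E u := by
  obtain ⟨hi, hj, hk⟩ := hE h hh
  simp only [hyperedgeElems, Finset.mem_insert, Finset.mem_singleton] at hu
  rcases hu with rfl | rfl | rfl | rfl <;> assumption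

lemma edgeTasks_eq_product (h : ℕ × ℕ × ℕ) : edgeTasks h = hyperedgeElems h ×ˢ Finset.univ := by
  ext ⟨u, β⟩
  cases β <;> simp [edgeTasks, hyperedgeElems]

lemma validElem_of_mem_edgeTasks (hE : ValidE q E) (hh : h ∈ E) {t : UTask}
    (ht : t ∈ edgeTasks h) : validElem q E t.1 :=
  validElem_of_mem_hyperedgeElems hE hh (Finset.mem_product.1 (edgeTasks_eq_product h ▸ ht)).1

lemma card_hyperedgeElems (h : ℕ × ℕ × ℕ) : (hyperedgeElems h).card = 4 := by
  simp [hyperedgeElems]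

lemma sum_elemVal_hyperedgeElems (q : ℕ) (h : ℕ × ℕ × ℕ) :
    ∑ u ∈ hyperedgeElems h, elemVal q u = 0 := by
  simp only [hyperedgeElems, Finset.sum_insert, Finset.mem_insert, Finset.mem_singleton,
    reduceCtorEq, or_self, not_false_eq_true, Finset.sum_singleton, elemVal, xnum, ynum, znum,
    hnum]
  ring

lemma sum_filter_excess_hyperedgeElems_le (c : ℤ) :
    ∑ u ∈ hyperedgeElems h with 10 * elemVal q u < c, (20 * elemVal q u + 1) ≤
      if 0 < c then 4 else 0 := by
  split_ifs with hc
  · have hlow : ∑ u ∈ hyperedgeElems h with 10 * elemVal q u < c, 10 * elemVal q u ≤ 0 :=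
      sum_filter_lt_nonpos_of_sum_eq_zero
        (by rw [← Finset.mul_sum, sum_elemVal_hyperedgeElems, mul_zero]) c
    have hcard := (Finset.card_filter_le (hyperedgeElems h) (10 * elemVal q · < c)).trans_eq
      (card_hyperedgeElems h)
    calc ∑ u ∈ hyperedgeElems h with 10 * elemVal q u < c, (20 * elemVal q u + 1)
        = 2 * ∑ u ∈ hyperedgeElems h with 10 * elemVal q u < c, 10 * elemVal q u +
            ({u ∈ hyperedgeElems h | 10 * elemVal q u < c} : Finset Elem).card := by
          rw [Finset.sum_add_distrib, Finset.mul_sum, Finset.card_eq_sum_ones, Nat.cast_sum]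
          simp only [← mul_assoc, Nat.cast_one]
          norm_num
      _ ≤ 4 := by omega
  · exact Finset.sum_nonpos fun u hu => by have := (Finset.mem_filter.1 hu).2; omega

lemma load_le_cap (hE : ValidE q E) (hh : h ∈ E) (e : ℤ) :
    ∑ t ∈ edgeTasks h with e ∈ sched q E (leftRightStart q E b) t, taskDem q E t ≤ cap q E e := by
  by_cases he : e ∈ block q E b
  · have hbase : ∑ u ∈ hyperedgeElems h, ((Aval q E : ℤ) - 10 * elemVal q u) = 4 * Aval q E := by
      rw [Finset.sum_sub_distrib, ← Finset.mul_sum, sum_elemVal_hyperedgeElems, Finset.sum_const,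
        card_hyperedgeElems]
      simp
    rw [Finset.sum_filter, edgeTasks_eq_product, Finset.sum_product]
    simp only [pair_demand_of_mem_block he]
    rw [Finset.sum_add_distrib, hbase, ← Finset.sum_filter, cap_of_mem_block he]
    have := sum_filter_excess_hyperedgeElems_le (q := q) (h := h) (blockStart q E b + Aval q E - e)
    split_ifs at this ⊢ <;> omega
  · have hidle : ∀ t ∈ edgeTasks h, e ∉ sched q E (leftRightStart q E b) t := fun t ht hte =>
      he (sched_leftRightStart_subset_block (validElem_of_mem_edgeTasks hE hh ht) hte)
    rw [Finset.filter_false_of_mem hidle, Finset.sum_empty]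
    exact cap_nonneg q E e

end hyperedgeElems

/-- For every hyperedge `h_ℓ = (x_i, y_j, z_k) ∈ E` and every block `I` of `σ(K)`, the eight
tasks `t_L(x_i), t_R(x_i), t_L(y_j), t_R(y_j), t_L(z_k), t_R(z_k), t_L(h_ℓ), t_R(h_ℓ)` admit a
feasible schedule contained in `I`: concretely, starting the four tasks `t_L(·)` at the leftmost
edge of `I` and ending the four tasks `t_R(·)` at the rightmost edge of `I` is feasible. -/
theorem hyperedge_block_schedule (q : ℕ) (E : Finset (ℕ × ℕ × ℕ)) (hE : ValidE q E)
    (h : ℕ × ℕ × ℕ) (hh : h ∈ E) (b : ℕ) (hb : b < q) :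
    Feasible q E (edgeTasks h)
      (fun t => if t.2 then blockStart q E b
        else blockStart q E b + 2 * (Aval q E : ℤ) - taskLen q E t) ∧
    ∀ t ∈ edgeTasks h,
      sched q E
        (fun t => if t.2 then blockStart q E b
          else blockStart q E b + 2 * (Aval q E : ℤ) - taskLen q E t) t ⊆ block q E b := by
  change Feasible q E (edgeTasks h) (leftRightStart q E b) ∧
    ∀ t ∈ edgeTasks h, sched q E (leftRightStart q E b) t ⊆ block q E b
  have hvalid := fun t (ht : t ∈ edgeTasks h) => validElem_of_mem_edgeTasks hE hh ht
  have hpath := block_within_path E hb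
  refine ⟨⟨hvalid, fun t ht => ?_, fun e _ _ => load_le_cap hE hh e⟩,
    fun t ht => sched_leftRightStart_subset_block (hvalid t ht)⟩
  have := leftRightStart_bounds (b := b) (hvalid t ht)
  exact ⟨by omega, by omega⟩
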